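/- arXiv:1206.4854 — 11 statements merged into one kernel-verified Lean document; each statement's English description precedes it below -/
import Mathlib

section
/- Let Γ be a finite constraint language over D in which every relation has arity at most r ≥ 1, and suppose |D| ≥ 2. For every instance of CSP(Γ), every assignment f : V → D, and every integer k ≥ 0, the number of minimal satisfying extensions of f of size at most k is at most ((|D|−1)·r)^k. -/
/-!
Common definitions for formalizing "Constraint satisfaction parameterized by
solution size" (Bulatov, Marx).  The finite domain `D` has a distinguished
element `0`.  A constraint language is a set of (arity, relation) pairs.
-/

namespace CSPPaper

variable {D : Type*} {V : Type*}

/-- A constraint language over `D`: a set of pairs (arity, relation). -/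
abbrev Lang (D : Type*) : Type _ := Set (Σ n : ℕ, Set (Fin n → D))

/-- The set of values appearing in tuples of the relations of `Γ`
(together with the distinguished value `0`). -/
def dom [Zero D] (Γ : Lang D) : Set D :=
  insert 0 { d | ∃ R ∈ Γ, ∃ t ∈ R.2, ∃ i, t i = d }

/-- A relation is 0-valid if the all-zero tuple belongs to it. -/
def ZeroValid [Zero D] {n : ℕ} (R : Set (Fin n → D)) : Prop :=
  (fun _ => (0 : D)) ∈ R

/-- Two tuples are disjoint if at every coordinate at least one of them is `0`. -/
def DisjTup [Zero D] {ι : Type*} (t₁ t₂ : ι → D) : Prop :=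
  ∀ i, t₁ i = 0 ∨ t₂ i = 0

open Classical in
/-- The union of two (disjoint) tuples. -/
noncomputable def unionTup [Zero D] {ι : Type*} (t₁ t₂ : ι → D) : ι → D :=
  fun i => if t₁ i = 0 then t₂ i else t₁ i

/-- A tuple is contained in a set `C` if all of its nonzero coordinates lie in `C`. -/
def TupIn [Zero D] {ι : Type*} (t : ι → D) (C : Set D) : Prop :=
  ∀ i, t i ≠ 0 → t i ∈ C

open Classical in
/-- Extend an `m`-tuple to an `n`-tuple along the coordinates in the range of `e`,
using the constants `c` on the remaining coordinates. -/
noncomputable def extendTup {n m : ℕ} (e : Fin m → Fin n) (c : Fin n → D)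
    (t : Fin m → D) : Fin n → D :=
  fun j => if h : ∃ i, e i = j then t h.choose else c j

/-- Substitution of constants: the relation obtained from `R` by keeping the coordinates
in the range of the order-embedding `e` (in order) and substituting the constants `c`
into all the remaining coordinates. -/
noncomputable def substRel {n m : ℕ} (R : Set (Fin n → D)) (e : Fin m ↪o Fin n)
    (c : Fin n → D) : Set (Fin m → D) :=
  { t | extendTup (fun i => e i) c t ∈ R }

/-- `Γ` is a cc0-language: every relation of `Γ` is 0-valid and every 0-valid relation
obtained from a relation of `Γ` by substituting constants belongs to `Γ`. -/
def IsCC0 [Zero D] (Γ : Lang D) : Prop :=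
  (∀ R ∈ Γ, ZeroValid R.2) ∧
  ∀ R ∈ Γ, ∀ (m : ℕ) (e : Fin m ↪o Fin R.1) (c : Fin R.1 → D),
    ZeroValid (substRel R.2 e c) →
      (⟨m, substRel R.2 e c⟩ : Σ n : ℕ, Set (Fin n → D)) ∈ Γ

/-- A (0-valid) relation is weakly separable: closed under union of disjoint tuples
and under difference. -/
def WeaklySepRel [Zero D] {n : ℕ} (R : Set (Fin n → D)) : Prop :=
  (∀ t₁ ∈ R, ∀ t₂ ∈ R, DisjTup t₁ t₂ → unionTup t₁ t₂ ∈ R) ∧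
  (∀ t₁ t₂ : Fin n → D, DisjTup t₁ t₂ → t₂ ∈ R → unionTup t₁ t₂ ∈ R → t₁ ∈ R)

/-- A constraint language is weakly separable if all of its relations are. -/
def WeaklySep [Zero D] (Γ : Lang D) : Prop :=
  ∀ R ∈ Γ, WeaklySepRel R.2

/-- A union counterexample `(R, t₁, t₂)` to weak separability. -/
def UnionCE [Zero D] (Γ : Lang D) (R : Σ n : ℕ, Set (Fin n → D))
    (t₁ t₂ : Fin R.1 → D) : Prop :=
  R ∈ Γ ∧ DisjTup t₁ t₂ ∧ t₁ ∈ R.2 ∧ t₂ ∈ R.2 ∧ unionTup t₁ t₂ ∉ R.2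

/-- A difference counterexample `(R, t₁, t₂)` to weak separability. -/
def DiffCE [Zero D] (Γ : Lang D) (R : Σ n : ℕ, Set (Fin n → D))
    (t₁ t₂ : Fin R.1 → D) : Prop :=
  R ∈ Γ ∧ DisjTup t₁ t₂ ∧ t₂ ∈ R.2 ∧ unionTup t₁ t₂ ∈ R.2 ∧ t₁ ∉ R.2

/-- An endomorphism of a constraint language (as a total map on `D`). -/
def IsEndo [Zero D] (Γ : Lang D) (h : D → D) : Prop :=
  h 0 = 0 ∧ ∀ R ∈ Γ, ∀ t ∈ R.2, (fun i => h (t i)) ∈ R.2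

/-- A multivalued morphism of a constraint language (as a total map `D → Set D`). -/
def IsMVM [Zero D] (Γ : Lang D) (φ : D → Set D) : Prop :=
  φ 0 = {0} ∧ ∀ R ∈ Γ, ∀ t ∈ R.2, ∀ s : Fin R.1 → D, (∀ i, s i ∈ φ (t i)) → s ∈ R.2

/-- `x` produces `y` in `Γ`: there is a multivalued morphism `φ` with `φ x = {0, y}`
and `φ z = {0}` for every `z ≠ x`. -/
def Produces [Zero D] (Γ : Lang D) (x y : D) : Prop :=
  ∃ φ : D → Set D, IsMVM Γ φ ∧ φ x = {0, y} ∧ ∀ z, z ≠ x → φ z = {0}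

/-- `y` is regular (type 1): no multivalued morphism has `0, y ∈ φ x` for some
`x ∈ dom Γ`. -/
def IsRegular [Zero D] (Γ : Lang D) (y : D) : Prop :=
  ¬ ∃ (φ : D → Set D) (x : D), IsMVM Γ φ ∧ x ∈ dom Γ ∧ 0 ∈ φ x ∧ y ∈ φ x

/-- `y` is semiregular (type 2): some multivalued morphism has `0, y ∈ φ x` for some
`x ∈ dom Γ`, but no `x ∈ dom Γ` produces `y`. -/
def IsSemiregular [Zero D] (Γ : Lang D) (y : D) : Prop :=
  (∃ (φ : D → Set D) (x : D), IsMVM Γ φ ∧ x ∈ dom Γ ∧ 0 ∈ φ x ∧ y ∈ φ x) ∧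
    ¬ ∃ x ∈ dom Γ, Produces Γ x y

/-- `y` is self-producing (type 3): `y` produces `y`, and every `x` that produces `y`
is produced by `y`. -/
def IsSelfProducing [Zero D] (Γ : Lang D) (y : D) : Prop :=
  Produces Γ y y ∧ ∀ x ∈ dom Γ, Produces Γ x y → Produces Γ y x

/-- `y` is degenerate (type 4): none of the above. -/
def IsDegenerate [Zero D] (Γ : Lang D) (y : D) : Prop :=
  ¬ IsRegular Γ y ∧ ¬ IsSemiregular Γ y ∧ ¬ IsSelfProducing Γ y

open Classical in
/-- The type (1–4) of a value: regular, semiregular, self-producing, degenerate. -/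
noncomputable def typeOf [Zero D] (Γ : Lang D) (y : D) : ℕ :=
  if IsRegular Γ y then 1
  else if IsSemiregular Γ y then 2
  else if IsSelfProducing Γ y then 3
  else 4

open Classical in
/-- The retraction onto `X`: identity on `X` and `0` elsewhere. -/
noncomputable def prRet [Zero D] (X : Set D) : D → D :=
  fun x => if x ∈ X then x else 0

/-- A component of `Γ`: a nonempty subset of `dom Γ \ {0}` whose retraction is an
endomorphism of `Γ`. -/
def IsComponent [Zero D] (Γ : Lang D) (C : Set D) : Prop :=
  C.Nonempty ∧ C ⊆ dom Γ \ {0} ∧ IsEndo Γ (prRet C)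

/-- `C` is the component of `Γ` generated by `X`: the inclusion-minimal component
containing `X`. -/
def GenComponent [Zero D] (Γ : Lang D) (X C : Set D) : Prop :=
  IsComponent Γ C ∧ X ⊆ C ∧ ∀ C', IsComponent Γ C' → X ⊆ C' → C ⊆ C'

/-- Restriction of a relation to a subset of the domain. -/
def restrictRel {n : ℕ} (D' : Set D) (R : Set (Fin n → D)) : Set (Fin n → D) :=
  { t ∈ R | ∀ i, t i ∈ D' }

/-- Restriction `Γ|D'` of a language to a subset of the domain. -/
def restrictLang (Γ : Lang D) (D' : Set D) : Lang D :=
  (fun R : Σ n : ℕ, Set (Fin n → D) =>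
    (⟨R.1, restrictRel D' R.2⟩ : Σ n : ℕ, Set (Fin n → D))) '' Γ

/-- Inner homomorphism of `Γ` from `D₁` to `D₂` (as a total map on `D`). -/
def InnerHom [Zero D] (Γ : Lang D) (D₁ D₂ : Set D) (h : D → D) : Prop :=
  h 0 = 0 ∧ (∀ a ∈ D₁, h a ∈ D₂) ∧
  ∀ R ∈ Γ, ∀ t ∈ R.2, (∀ i, t i ∈ D₁) → (fun i => h (t i)) ∈ R.2

/-- `D₁` is a closed set in `Γ`: `0 ∈ D₁ ⊆ dom Γ` and no inner homomorphism of `Γ`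
from `D₁` to `dom Γ` maps an element of `D₁` outside `D₁`. -/
def ClosedSet [Zero D] (Γ : Lang D) (D₁ : Set D) : Prop :=
  0 ∈ D₁ ∧ D₁ ⊆ dom Γ ∧
  ∀ h : D → D, InnerHom Γ D₁ (dom Γ) h → ∀ a ∈ D₁, h a ∈ D₁

/-- The set of nonzero nondegenerate values of `Γ`. -/
def NDvals [Zero D] (Γ : Lang D) : Set D :=
  { y | y ∈ dom Γ ∧ y ≠ 0 ∧ ¬ IsDegenerate Γ y }

/-- An instance of a CSP over domain `D` with variable set `V`: a set of constraints,
each consisting of an arity `n`, a scope (an `n`-tuple of variables, repetitions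
allowed) and an `n`-ary relation. -/
structure CSPInstance (D : Type*) (V : Type*) where
  cons : Set (Σ n : ℕ, (Fin n → V) × Set (Fin n → D))

/-- All constraint relations of the instance belong to `Γ` (instance of `CSP(Γ)`). -/
def CSPInstance.InLang (I : CSPInstance D V) (Γ : Lang D) : Prop :=
  ∀ c ∈ I.cons, (⟨c.1, c.2.2⟩ : Σ n : ℕ, Set (Fin n → D)) ∈ Γ

/-- `τ` is a satisfying assignment of the instance. -/
def CSPInstance.Sat (I : CSPInstance D V) (τ : V → D) : Prop :=
  ∀ c ∈ I.cons, (fun i => τ (c.2.1 i)) ∈ c.2.2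

/-- `f'` extends `f`: they agree on all variables where `f` is nonzero. -/
def ExtendsA [Zero D] (f' f : V → D) : Prop :=
  ∀ v, f v ≠ 0 → f' v = f v

/-- The size of an assignment: the number of variables with nonzero value. -/
noncomputable def sizeA [Zero D] (f : V → D) : ℕ :=
  Set.ncard { v | f v ≠ 0 }

/-- `f'` is a minimal satisfying extension of `f` in the instance `I`. -/
def MinSatExt [Zero D] (I : CSPInstance D V) (f f' : V → D) : Prop :=
  I.Sat f' ∧ ExtendsA f' f ∧
  ∀ f'' : V → D, I.Sat f'' → ExtendsA f'' f → ExtendsA f' f'' → f'' = f'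

/-- A minimal satisfying assignment of `I`: satisfying, not identically zero, and not
a proper extension of any other not-identically-zero satisfying assignment. -/
def MinSatAssign [Zero D] (I : CSPInstance D V) (f : V → D) : Prop :=
  I.Sat f ∧ f ≠ (fun _ => 0) ∧
  ∀ g : V → D, I.Sat g → g ≠ (fun _ => 0) → ExtendsA f g → g = f

open Classical in
/-- The assignment giving value `d` to variable `v` and `0` to every other variable. -/
noncomputable def delta [Zero D] (v : V) (d : D) : V → D :=
  fun w => if w = v then d else 0

/-- The integers `Z_{i,d}^{t,Δ}` of the paper. -/
def Zc (t Δ i d : ℕ) : ℕ :=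
  (4*t*Δ)^(2*t*Δ + (i*Δ + d)) + (4*t*Δ)^(5*t*Δ - (i*Δ + d))

/-- The set `Z^{t,Δ}` of all the integers `Z_{i,d}^{t,Δ}` for `1 ≤ i ≤ t`, `1 ≤ d ≤ Δ`. -/
def Zset (t Δ : ℕ) : Set ℕ :=
  { z | ∃ i d : ℕ, 1 ≤ i ∧ i ≤ t ∧ 1 ≤ d ∧ d ≤ Δ ∧ z = Zc t Δ i d }


lemma ncard_biUnion_le' {ι α : Type*} [Finite α] (u : Finset ι) (t : ι → Set α) :
    (⋃ i ∈ u, t i).ncard ≤ ∑ i ∈ u, (t i).ncard := by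
  classical
  induction u using Finset.induction with
  | empty => simp
  | insert a s h ih =>
    rw [Finset.set_biUnion_insert, Finset.sum_insert h]
    exact le_trans (Set.ncard_union_le _ _) (Nat.add_le_add_left ih _)

lemma ncard_iUnion_le' {ι α : Type*} [Finite α] [Fintype ι] (t : ι → Set α) :
    (⋃ i, t i).ncard ≤ ∑ i, (t i).ncard := by
  simpa using ncard_biUnion_le' (Finset.univ : Finset ι) t

lemma eq_of_extendsA_of_sizeA_le {D V : Type*} [Zero D] [Fintype V] {f f' : V → D}
    (h : ExtendsA f' f) (hle : sizeA f' ≤ sizeA f) : f' = f := by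
  have hsub : {v | f v ≠ 0} ⊆ {v | f' v ≠ 0} := by
    intro v hv
    simp only [Set.mem_setOf_eq] at *
    rw [h v hv]; exact hv
  have heq := Set.eq_of_subset_of_ncard_le hsub hle (Set.toFinite _)
  funext v
  by_cases hv : f v = 0
  · rw [hv]
    by_contra hne
    have hmem : v ∈ {v | f' v ≠ 0} := hne
    rw [← heq] at hmem
    exact hmem hv
  · exact h v hv

open Classical in
lemma statement0_key {D : Type*} [Zero D] [Fintype D] {V : Type*} [Fintype V]
    (Γ : Lang D) (r : ℕ) (hr : 1 ≤ r)
    (harity : ∀ R ∈ Γ, R.1 ≤ r) (hD : 2 ≤ Fintype.card D)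
    (I : CSPInstance D V) (hI : I.InLang Γ) :
    ∀ (n : ℕ) (f : V → D) (k : ℕ), k ≤ sizeA f + n →
      Set.ncard { f' : V → D | MinSatExt I f f' ∧ sizeA f' ≤ k } ≤
        ((Fintype.card D - 1) * r) ^ n := by
  classical
  have hD1 : 1 ≤ Fintype.card D - 1 := by omega
  have hM1 : 1 ≤ (Fintype.card D - 1) * r := Nat.one_le_iff_ne_zero.mpr
    (Nat.mul_ne_zero (by omega) (by omega))
  intro n
  induction n with
  | zero =>
    intro f k hk
    have hsub : {f' | MinSatExt I f f' ∧ sizeA f' ≤ k} ⊆ {f} := by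
      rintro f' ⟨⟨hs', he', hmin⟩, hsz⟩
      exact eq_of_extendsA_of_sizeA_le he' (le_trans hsz (by simpa using hk))
    calc Set.ncard {f' | MinSatExt I f f' ∧ sizeA f' ≤ k}
        ≤ Set.ncard {f} := Set.ncard_le_ncard hsub (Set.finite_singleton f)
      _ ≤ 1 := by simp
      _ ≤ _ := by simp
  | succ n ih =>
    intro f k hk
    by_cases hsat : I.Sat f
    · have hsub : {f' | MinSatExt I f f' ∧ sizeA f' ≤ k} ⊆ {f} := by
        rintro f' ⟨⟨hs', he', hmin⟩, hsz⟩
        exact (hmin f hsat (fun v _ => rfl) he').symm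
      calc Set.ncard {f' | MinSatExt I f f' ∧ sizeA f' ≤ k}
          ≤ Set.ncard {f} := Set.ncard_le_ncard hsub (Set.finite_singleton f)
        _ ≤ 1 := by simp
        _ ≤ _ := Nat.one_le_pow _ _ (by omega)
    · unfold CSPInstance.Sat at hsat
      push_neg at hsat
      obtain ⟨c, hc, hviol⟩ := hsat
      set g : Fin c.1 → D → (V → D) :=
        fun i d w => if w = c.2.1 i then d else f w with hg
      set idx := {p : Fin c.1 × {d : D // d ≠ 0} // f (c.2.1 p.1) = 0} with hidx
      set T : idx → Set (V → D) :=
        fun p => {f' | MinSatExt I (g p.1.1 p.1.2.1) f' ∧ sizeA f' ≤ k} with hT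
      have hsubset : {f' | MinSatExt I f f' ∧ sizeA f' ≤ k} ⊆ ⋃ p, T p := by
        rintro f' ⟨⟨hs', he', hmin⟩, hsz⟩
        have hdiff : ∃ i, f' (c.2.1 i) ≠ f (c.2.1 i) := by
          by_contra h
          push_neg at h
          apply hviol
          have h2 := hs' c hc
          have : (fun i => f' (c.2.1 i)) = (fun i => f (c.2.1 i)) := funext h
          rwa [this] at h2
        obtain ⟨i, hi⟩ := hdiff
        have hf0 : f (c.2.1 i) = 0 := by
          by_contra h; exact hi (he' _ h)
        have hf'0 : f' (c.2.1 i) ≠ 0 := fun h => hi (by rw [h, hf0])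
        refine Set.mem_iUnion.mpr ⟨⟨(i, ⟨f' (c.2.1 i), hf'0⟩), hf0⟩, ?_⟩
        refine ⟨⟨hs', ?_, ?_⟩, hsz⟩
        · intro w hw
          simp only [hg] at hw ⊢
          by_cases hwi : w = c.2.1 i
          · subst hwi; rw [if_pos rfl]
          · rw [if_neg hwi] at hw ⊢
            exact he' w hw
        · intro f'' hs'' he'' hext
          apply hmin f'' hs'' _ hext
          intro w hw
          have hwi : w ≠ c.2.1 i := fun h => hw (by rw [h, hf0])
          have hgw : g i (f' (c.2.1 i)) w ≠ 0 := by
            simp only [hg]; rw [if_neg hwi]; exact hw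
          have := he'' w hgw
          simp only [hg] at this
          rwa [if_neg hwi] at this
      have hTcard : ∀ p : idx, (T p).ncard ≤ ((Fintype.card D - 1) * r) ^ n := by
        rintro ⟨⟨i, d⟩, hp0⟩
        refine ih _ _ ?_
        show k ≤ sizeA (g i d.1) + n
        have hsz : sizeA (g i d.1) = sizeA f + 1 := by
          have hset : {w | g i d.1 w ≠ 0} = insert (c.2.1 i) {w | f w ≠ 0} := by
            ext w
            simp only [hg, Set.mem_setOf_eq, Set.mem_insert_iff]
            by_cases hwi : w = c.2.1 i
            · simp [hwi, d.2]
            · simp [hwi]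
          unfold sizeA
          rw [hset, Set.ncard_insert_of_notMem (by simpa using hp0) (Set.toFinite _)]
        omega
      have hcard : Fintype.card idx ≤ c.1 * (Fintype.card D - 1) := by
        calc Fintype.card idx ≤ Fintype.card (Fin c.1 × {d : D // d ≠ 0}) :=
              Fintype.card_subtype_le _
          _ = c.1 * (Fintype.card D - 1) := by
              rw [Fintype.card_prod, Fintype.card_fin]
              congr 1
              rw [Fintype.card_subtype_compl, Fintype.card_subtype_eq]
      have harc : c.1 ≤ r := harity ⟨c.1, c.2.2⟩ (hI c hc)
      calc Set.ncard {f' | MinSatExt I f f' ∧ sizeA f' ≤ k}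
          ≤ (⋃ p, T p).ncard := Set.ncard_le_ncard hsubset (Set.toFinite _)
        _ ≤ ∑ p : idx, (T p).ncard := ncard_iUnion_le' T
        _ ≤ ∑ _p : idx, ((Fintype.card D - 1) * r) ^ n :=
              Finset.sum_le_sum (fun p _ => hTcard p)
        _ = Fintype.card idx * ((Fintype.card D - 1) * r) ^ n := by
              rw [Finset.sum_const, smul_eq_mul, Finset.card_univ]
        _ ≤ ((Fintype.card D - 1) * r) * ((Fintype.card D - 1) * r) ^ n := by
              apply Nat.mul_le_mul_right
              calc Fintype.card idx ≤ c.1 * (Fintype.card D - 1) := hcard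
                _ ≤ (Fintype.card D - 1) * r := by
                    rw [Nat.mul_comm]
                    exact Nat.mul_le_mul_left _ harc
        _ = ((Fintype.card D - 1) * r) ^ (n + 1) := (pow_succ' _ _).symm


/-- For a finite constraint language `Γ` with all arities at most `r ≥ 1`
over a finite domain `D` with `|D| ≥ 2`, for every instance of `CSP(Γ)`, every
assignment `f` and every `k`, the number of minimal satisfying extensions of `f` of
size at most `k` is at most `((|D|-1)·r)^k`. -/
theorem statement0 {D : Type*} [Zero D] [Fintype D] {V : Type*} [Fintype V]
    (Γ : Lang D) (hΓfin : Γ.Finite) (r : ℕ) (hr : 1 ≤ r)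
    (harity : ∀ R ∈ Γ, R.1 ≤ r) (hD : 2 ≤ Fintype.card D)
    (I : CSPInstance D V) (hI : I.InLang Γ) (f : V → D) (k : ℕ) :
    Set.ncard { f' : V → D | MinSatExt I f f' ∧ sizeA f' ≤ k } ≤
      ((Fintype.card D - 1) * r) ^ k := by
  have h := statement0_key Γ r hr harity hD I hI k f k (Nat.le_add_left _ _)
  simpa using h

end CSPPaper
end

section
/- Let Γ be a finite constraint language over D in which every relation has arity at most r ≥ 1, and suppose |D| ≥ 2. For every instance of CSP(Γ), every variable v, and every integer k ≥ 0, the number of minimal satisfying assignments of size at most k in which v has a nonzero value is at most (|D|−1)·((|D|−1)·r)^k. -/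
/-!
Common definitions for formalizing "Constraint satisfaction parameterized by
solution size" (Bulatov, Marx).  The finite domain `D` has a distinguished
element `0`.  A constraint language is a set of (arity, relation) pairs.
-/

namespace CSPPaper

variable {D : Type*} {V : Type*}

/-! ### Auxiliary machinery for Statement 1: a bounded search tree encoding. -/

section Statement1Aux

variable {D : Type*} {V : Type*} [Zero D]

open Classical in
/-- Update an assignment at one variable (classical decidability). -/
noncomputable def updA (g : V → D) (w : V) (d : D) : V → D :=
  fun x => if x = w then d else g x

lemma updA_self (g : V → D) (w : V) (d : D) : updA g w d w = d := by
  simp [updA]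

lemma updA_ne (g : V → D) (w : V) (d : D) {x : V} (h : x ≠ w) : updA g w d x = g x := by
  simp [updA, h]

open Classical in
/-- A canonical constraint of `I` violated by `g` (junk if none). -/
noncomputable def badConsA (I : CSPInstance D V) (g : V → D) :
    Σ n : ℕ, (Fin n → V) × Set (Fin n → D) :=
  if h : ∃ c ∈ I.cons, (fun i => g (c.2.1 i)) ∉ c.2.2 then h.choose
  else ⟨0, (finZeroElim, ∅)⟩

lemma badConsA_spec (I : CSPInstance D V) {g : V → D} (h : ¬ I.Sat g) :
    badConsA I g ∈ I.cons ∧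
      (fun i => g ((badConsA I g).2.1 i)) ∉ (badConsA I g).2.2 := by
  have h' : ∃ c ∈ I.cons, (fun i => g (c.2.1 i)) ∉ c.2.2 := by
    by_contra hc
    push_neg at hc
    exact h hc
  rw [badConsA, dif_pos h']
  exact ⟨h'.choose_spec.1, h'.choose_spec.2⟩

open Classical in
/-- The variable designated by branching choice `j` at partial assignment `g`. -/
noncomputable def stepVarA (I : CSPInstance D V) (v : V) {r : ℕ} (g : V → D) (j : Fin r) : V :=
  if h : (j : ℕ) < (badConsA I g).1 then (badConsA I g).2.1 ⟨j, h⟩ else v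

open Classical in
/-- Replay a sequence of branching choices (the "decoder"). -/
noncomputable def runA (I : CSPInstance D V) (v : V) {r : ℕ} :
    (V → D) → List (Fin r × {d : D // d ≠ 0}) → V → D
  | g, [] => g
  | g, p :: rest =>
      if I.Sat g then g else runA I v (updA g (stepVarA I v g p.1) p.2.1) rest

open Classical in
/-- The canonical sequence of branching choices leading to `f` (the "encoder"). -/
noncomputable def encA (I : CSPInstance D V) {r : ℕ} (hr : 0 < r) (d₁ : {d : D // d ≠ 0})
    (f : V → D) : (V → D) → ℕ → List (Fin r × {d : D // d ≠ 0})
  | _, 0 => []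
  | g, n + 1 =>
      if I.Sat g then (⟨0, hr⟩, d₁) :: encA I hr d₁ f g n
      else
        if h : ∃ i : Fin (badConsA I g).1,
            g ((badConsA I g).2.1 i) ≠ f ((badConsA I g).2.1 i) ∧ (i : ℕ) < r ∧
              f ((badConsA I g).2.1 i) ≠ 0 then
          (⟨(h.choose : ℕ), h.choose_spec.2.1⟩,
            ⟨f ((badConsA I g).2.1 h.choose), h.choose_spec.2.2⟩) ::
            encA I hr d₁ f
              (updA g ((badConsA I g).2.1 h.choose) (f ((badConsA I g).2.1 h.choose))) n
        else (⟨0, hr⟩, d₁) :: encA I hr d₁ f g n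

lemma encA_length (I : CSPInstance D V) {r : ℕ} (hr : 0 < r) (d₁ : {d : D // d ≠ 0})
    (f : V → D) : ∀ (n : ℕ) (g : V → D), (encA I hr d₁ f g n).length = n := by
  intro n
  induction n with
  | zero => intro g; rfl
  | succ n ih =>
      intro g
      rw [encA]
      split
      · simp [ih]
      · split <;> simp [ih]

lemma runA_encA {r : ℕ} (hr : 0 < r) (d₁ : {d : D // d ≠ 0}) (I : CSPInstance D V) [Finite V]
    (Γ : Lang D) (hI : I.InLang Γ) (harity : ∀ R ∈ Γ, R.1 ≤ r)
    (v : V) (f : V → D) (hf : MinSatAssign I f) :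
    ∀ (n : ℕ) (g : V → D), (∀ w, g w = 0 ∨ g w = f w) → g v ≠ 0 →
      Set.ncard {w | f w ≠ 0 ∧ g w = 0} ≤ n →
      runA I v g (encA I hr d₁ f g n) = f := by
  intro n
  induction n with
  | zero =>
      intro g hPg hgv hn
      have hzero : Set.ncard {w | f w ≠ 0 ∧ g w = 0} = 0 := Nat.le_zero.mp hn
      have hempty : {w | f w ≠ 0 ∧ g w = 0} = ∅ :=
        (Set.ncard_eq_zero (Set.toFinite _)).mp hzero
      have hforall := Set.eq_empty_iff_forall_notMem.mp hempty
      have hgf : g = f := by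
        funext w
        rcases hPg w with h0 | hfw
        · by_cases hf0 : f w = 0
          · rw [h0, hf0]
          · exact absurd (⟨hf0, h0⟩ : f w ≠ 0 ∧ g w = 0) (hforall w)
        · exact hfw
      rw [encA, runA]
      exact hgf
  | succ n ih =>
      intro g hPg hgv hn
      by_cases hs : I.Sat g
      · have hgne : g ≠ (fun _ => 0) := fun h => hgv (by rw [h])
        have hext : ExtendsA f g := fun w hw => ((hPg w).resolve_left hw).symm
        have hgf : g = f := hf.2.2 g hs hgne hext
        rw [encA, if_pos hs, runA, if_pos hs]
        exact hgf
      · obtain ⟨hc1, hc2⟩ := badConsA_spec I hs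
        have hfc : (fun i => f ((badConsA I g).2.1 i)) ∈ (badConsA I g).2.2 :=
          hf.1 (badConsA I g) hc1
        have hex : ∃ i : Fin (badConsA I g).1,
            g ((badConsA I g).2.1 i) ≠ f ((badConsA I g).2.1 i) := by
          by_contra hno
          push_neg at hno
          exact hc2 (by rw [show (fun i => g ((badConsA I g).2.1 i)) =
            fun i => f ((badConsA I g).2.1 i) from funext hno]; exact hfc)
        obtain ⟨i, hi⟩ := hex
        have h0 : g ((badConsA I g).2.1 i) = 0 := (hPg _).resolve_right hi
        have hfne0 : f ((badConsA I g).2.1 i) ≠ 0 := fun h => hi (by rw [h0, h])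
        have hir : (i : ℕ) < r :=
          lt_of_lt_of_le i.isLt (harity ⟨(badConsA I g).1, (badConsA I g).2.2⟩ (hI _ hc1))
        have hEx : ∃ i : Fin (badConsA I g).1,
            g ((badConsA I g).2.1 i) ≠ f ((badConsA I g).2.1 i) ∧ (i : ℕ) < r ∧
              f ((badConsA I g).2.1 i) ≠ 0 := ⟨i, hi, hir, hfne0⟩
        rw [encA, if_neg hs, dif_pos hEx, runA, if_neg hs]
        obtain ⟨hne₀, hlt₀, hnz₀⟩ := hEx.choose_spec
        have hgw0 : g ((badConsA I g).2.1 hEx.choose) = 0 := (hPg _).resolve_right hne₀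
        have hstep : stepVarA I v g (⟨(hEx.choose : ℕ), hlt₀⟩ : Fin r) =
            (badConsA I g).2.1 hEx.choose := by
          rw [stepVarA]
          have hlt : ((⟨(hEx.choose : ℕ), hlt₀⟩ : Fin r) : ℕ) < (badConsA I g).1 :=
            hEx.choose.isLt
          rw [dif_pos hlt]
        rw [hstep]
        have hA : ∀ w', updA g ((badConsA I g).2.1 hEx.choose)
            (f ((badConsA I g).2.1 hEx.choose)) w' = 0 ∨
            updA g ((badConsA I g).2.1 hEx.choose)
              (f ((badConsA I g).2.1 hEx.choose)) w' = f w' := by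
          intro w'
          by_cases hww : w' = (badConsA I g).2.1 hEx.choose
          · subst hww; rw [updA_self]; right; rfl
          · rw [updA_ne _ _ _ hww]; exact hPg w'
        have hB : updA g ((badConsA I g).2.1 hEx.choose)
            (f ((badConsA I g).2.1 hEx.choose)) v ≠ 0 := by
          by_cases hvw : v = (badConsA I g).2.1 hEx.choose
          · rw [hvw, updA_self]; exact hnz₀
          · rw [updA_ne _ _ _ hvw]; exact hgv
        have hC : Set.ncard {w | f w ≠ 0 ∧ updA g ((badConsA I g).2.1 hEx.choose)
            (f ((badConsA I g).2.1 hEx.choose)) w = 0} ≤ n := by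
          have hwmem : (badConsA I g).2.1 hEx.choose ∈ {w' | f w' ≠ 0 ∧ g w' = 0} :=
            ⟨hnz₀, hgw0⟩
          have hsub : {w' | f w' ≠ 0 ∧
              updA g ((badConsA I g).2.1 hEx.choose) (f ((badConsA I g).2.1 hEx.choose)) w'
                = 0} ⊆ {w' | f w' ≠ 0 ∧ g w' = 0} \ {(badConsA I g).2.1 hEx.choose} := by
            intro w' hw'
            obtain ⟨h1, h2⟩ := hw'
            have hne : w' ≠ (badConsA I g).2.1 hEx.choose := by
              intro e
              rw [e, updA_self] at h2
              exact hnz₀ h2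
            exact ⟨⟨h1, by rwa [updA_ne _ _ _ hne] at h2⟩, hne⟩
          have h1 := Set.ncard_le_ncard hsub (Set.toFinite _)
          have h2 := Set.ncard_diff_singleton_lt_of_mem hwmem (Set.toFinite _)
          omega
        exact ih _ hA hB hC

end Statement1Aux

/-- For a finite constraint language `Γ` with all arities at most `r ≥ 1`
over a finite domain `D` with `|D| ≥ 2`, for every instance of `CSP(Γ)`, every
variable `v` and every `k`, the number of minimal satisfying assignments of size at
most `k` in which `v` is nonzero is at most `(|D|-1)·((|D|-1)·r)^k`. -/
theorem statement1 {D : Type*} [Zero D] [Fintype D] {V : Type*} [Fintype V]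
    (Γ : Lang D) (hΓfin : Γ.Finite) (r : ℕ) (hr : 1 ≤ r)
    (harity : ∀ R ∈ Γ, R.1 ≤ r) (hD : 2 ≤ Fintype.card D)
    (I : CSPInstance D V) (hI : I.InLang Γ) (v : V) (k : ℕ) :
    Set.ncard { f : V → D | MinSatAssign I f ∧ f v ≠ 0 ∧ sizeA f ≤ k } ≤
      (Fintype.card D - 1) * ((Fintype.card D - 1) * r) ^ k := by
  classical
  obtain ⟨d₁v, hd₁⟩ := Fintype.exists_ne_of_one_lt_card (by omega) (0 : D)
  set d₁ : {d : D // d ≠ 0} := ⟨d₁v, hd₁⟩ with hd₁def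
  have hr0 : 0 < r := hr
  set S := {f : V → D | MinSatAssign I f ∧ f v ≠ 0 ∧ sizeA f ≤ k} with hS
  have hkey : ∀ f : V → D, f ∈ S →
      runA I v (delta v (f v)) (encA I hr0 d₁ f (delta v (f v)) k) = f := by
    intro f hfS
    obtain ⟨hmin, hfv, hsize⟩ := hfS
    apply runA_encA hr0 d₁ I Γ hI harity v f hmin k
    · intro w
      by_cases hwv : w = v
      · subst hwv; right; simp [delta]
      · left; simp [delta, hwv]
    · simpa [delta] using hfv
    · refine le_trans (le_trans (Set.ncard_le_ncard (fun w hw => hw.1) (Set.toFinite _))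
        ?_) hsize
      exact le_of_eq rfl
  let F : S → {d : D // d ≠ 0} × List.Vector (Fin r × {d : D // d ≠ 0}) k := fun f =>
    (⟨f.1 v, f.2.2.1⟩, ⟨encA I hr0 d₁ f.1 (delta v (f.1 v)) k, encA_length I hr0 d₁ f.1 k _⟩)
  have hFinj : Function.Injective F := by
    intro f₁ f₂ hEq
    have h1 : f₁.1 v = f₂.1 v := congrArg (fun p => p.1.1) hEq
    have h2 : encA I hr0 d₁ f₁.1 (delta v (f₁.1 v)) k =
        encA I hr0 d₁ f₂.1 (delta v (f₂.1 v)) k := congrArg (fun p => p.2.1) hEq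
    apply Subtype.ext
    calc f₁.1 = runA I v (delta v (f₁.1 v)) (encA I hr0 d₁ f₁.1 (delta v (f₁.1 v)) k) :=
          (hkey f₁.1 f₁.2).symm
      _ = runA I v (delta v (f₂.1 v)) (encA I hr0 d₁ f₂.1 (delta v (f₂.1 v)) k) := by
          rw [h2, h1]
      _ = f₂.1 := hkey f₂.1 f₂.2
  have hcard1 : Fintype.card {d : D // d ≠ 0} = Fintype.card D - 1 := by
    rw [Fintype.card_subtype_compl, Fintype.card_subtype_eq]
  calc S.ncard = Nat.card S := rfl
    _ ≤ Nat.card ({d : D // d ≠ 0} × List.Vector (Fin r × {d : D // d ≠ 0}) k) :=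
        Nat.card_le_card_of_injective F hFinj
    _ = Fintype.card ({d : D // d ≠ 0} × List.Vector (Fin r × {d : D // d ≠ 0}) k) :=
        Nat.card_eq_fintype_card
    _ = (Fintype.card D - 1) * ((Fintype.card D - 1) * r) ^ k := by
        rw [Fintype.card_prod, card_vector, Fintype.card_prod, Fintype.card_fin, hcard1,
          mul_comm r]

end CSPPaper
end

section
/- Let Γ be a weakly separable finite cc0-language over D and I an instance of CSP(Γ). Then every satisfying assignment f of I is the union of a finite family of pairwise disjoint minimal satisfying assignments (viewing assignments V → D as tuples indexed by V; the all-zero assignment is the empty union). -/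
/-!
Common definitions for formalizing "Constraint satisfaction parameterized by
solution size" (Bulatov, Marx).  The finite domain `D` has a distinguished
element `0`.  A constraint language is a set of (arity, relation) pairs.
-/

namespace CSPPaper

variable {D : Type*} {V : Type*}

lemma statement2_key {D : Type*} [Zero D] {V : Type*} [Fintype V]
    (Γ : Lang D) (hws : WeaklySep Γ)
    (I : CSPInstance D V) (hI : I.InLang Γ) :
    ∀ (n : ℕ) (f : V → D), sizeA f ≤ n → I.Sat f →
    ∃ s : Finset (V → D),
      (∀ g ∈ s, MinSatAssign I g) ∧
      (∀ g₁ ∈ s, ∀ g₂ ∈ s, g₁ ≠ g₂ → DisjTup g₁ g₂) ∧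
      (∀ v : V, (f v ≠ 0 → ∃ g ∈ s, g v = f v) ∧ (f v = 0 → ∀ g ∈ s, g v = 0)) := by
  classical
  intro n
  induction n with
  | zero =>
    intro f hsize hf
    refine ⟨∅, by simp, by simp, fun v => ⟨fun hv => absurd ?_ hv, by simp⟩⟩
    have : {v : V | f v ≠ 0} = ∅ := by
      have hfin : {v : V | f v ≠ 0}.Finite := Set.toFinite _
      have := Nat.le_zero.mp hsize
      rwa [sizeA, Set.ncard_eq_zero hfin] at this
    by_contra h
    exact absurd (Set.eq_empty_iff_forall_notMem.mp this v) (by simpa using h)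
  | succ n ih =>
    intro f hsize hf
    by_cases hf0 : f = (fun _ => (0 : D))
    · exact ⟨∅, by simp, by simp, fun v => ⟨fun hv => absurd (by rw [hf0]) hv, by simp⟩⟩
    -- the set of nonzero satisfying assignments below f
    set T : Set (V → D) := {g | I.Sat g ∧ ExtendsA f g ∧ g ≠ (fun _ => (0 : D))} with hT
    have hfT : f ∈ T := ⟨hf, fun v _ => rfl, hf0⟩
    have hTne : (sizeA '' T).Nonempty := ⟨sizeA f, f, hfT, rfl⟩
    obtain ⟨g, hgT, hgm⟩ : ∃ g ∈ T, sizeA g = sInf (sizeA '' T) := Nat.sInf_mem hTne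
    have hgmin : ∀ g' ∈ T, sizeA g ≤ sizeA g' := fun g' hg' => by
      rw [hgm]; exact Nat.sInf_le ⟨g', hg', rfl⟩
    obtain ⟨hgSat, hgExt, hgne⟩ := hgT
    -- g is a minimal satisfying assignment
    have hgMin : MinSatAssign I g := by
      refine ⟨hgSat, hgne, fun g'' hSat'' hne'' hExt'' => ?_⟩
      have hsub : {v : V | g'' v ≠ 0} ⊆ {v : V | g v ≠ 0} := by
        intro v hv
        have := hExt'' v hv
        simp only [Set.mem_setOf_eq] at *
        rw [this]; exact hv
      have hT'' : g'' ∈ T := by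
        refine ⟨hSat'', fun v hv => ?_, hne''⟩
        have h1 := hExt'' v hv
        have h2 := hgExt v (by rw [h1]; exact hv)
        rw [h2, h1]
      have hle : sizeA g ≤ sizeA g'' := hgmin g'' hT''
      have heq : {v : V | g'' v ≠ 0} = {v : V | g v ≠ 0} :=
        Set.eq_of_subset_of_ncard_le hsub hle (Set.toFinite _)
      funext v
      by_cases hv : g'' v ≠ 0
      · exact (hExt'' v hv).symm
      · push_neg at hv
        have : v ∉ {v : V | g v ≠ 0} := heq ▸ (by simpa using hv)
        simp only [Set.mem_setOf_eq, not_not] at this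
        rw [hv, this]
    -- the remainder f' = f - g
    set f' : V → D := fun v => if g v = 0 then f v else 0 with hf'def
    have hf'g : ∀ v, g v ≠ 0 → f' v = 0 := fun v hv => by simp [hf'def, hv]
    have hf'f : ∀ v, f' v ≠ 0 → f' v = f v := fun v hv => by
      by_cases h : g v = 0 <;> simp [hf'def, h] at hv ⊢
    have hunion : unionTup f' g = f := by
      funext v
      by_cases hg : g v = 0
      · simp only [unionTup, hf'def, hg, if_pos]
        by_cases h : f v = 0 <;> simp [h, hg]
      · have h1 : f' v = 0 := hf'g v hg
        simp [unionTup, h1, hgExt v hg]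
    have hf'Sat : I.Sat f' := by
      intro c hc
      have hwsR := hws ⟨c.1, c.2.2⟩ (hI c hc)
      refine hwsR.2 (fun i => f' (c.2.1 i)) (fun i => g (c.2.1 i)) ?_ (hgSat c hc) ?_
      · intro i
        by_cases h : g (c.2.1 i) = 0
        · exact Or.inr h
        · exact Or.inl (hf'g _ h)
      · have : (unionTup (fun i => f' (c.2.1 i)) (fun i => g (c.2.1 i)))
            = fun i => f (c.2.1 i) := by
          funext i
          have := congrFun hunion (c.2.1 i)
          simpa [unionTup] using this
        rw [this]; exact hf c hc
    -- size decreases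
    have hsub' : {v : V | f' v ≠ 0} ⊂ {v : V | f v ≠ 0} := by
      constructor
      · intro v hv
        simp only [Set.mem_setOf_eq] at *
        rw [← hf'f v hv]; exact hv
      · intro hsup
        obtain ⟨v₀, hv₀⟩ : ∃ v, g v ≠ 0 := by
          by_contra h
          push_neg at h
          exact hgne (funext h)
        have h1 : f v₀ ≠ 0 := by rw [hgExt v₀ hv₀]; exact hv₀
        have h2 := hsup h1
        simp only [Set.mem_setOf_eq] at h2
        exact h2 (hf'g v₀ hv₀)
    have hsize' : sizeA f' ≤ n := by
      have h1 : sizeA f' < sizeA f := Set.ncard_lt_ncard hsub' (Set.toFinite _)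
      omega
    obtain ⟨s', hs'min, hs'disj, hs'cov⟩ := ih f' hsize' hf'Sat
    -- s' assignments vanish where f' vanishes
    have hs'zero : ∀ v, f' v = 0 → ∀ g' ∈ s', g' v = 0 := fun v hv => (hs'cov v).2 hv
    have hgnotmem : g ∉ s' := by
      intro hmem
      obtain ⟨v₀, hv₀⟩ : ∃ v, g v ≠ 0 := by
        by_contra h; push_neg at h; exact hgne (funext h)
      exact hv₀ (hs'zero v₀ (hf'g v₀ hv₀) g hmem)
    refine ⟨insert g s', ?_, ?_, ?_⟩
    · intro g' hg'
      rcases Finset.mem_insert.mp hg' with h | h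
      · rw [h]; exact hgMin
      · exact hs'min g' h
    · intro g₁ hg₁ g₂ hg₂ hne
      have key : ∀ g' ∈ s', DisjTup g g' := by
        intro g' hg' v
        by_cases h : g v = 0
        · exact Or.inl h
        · exact Or.inr (hs'zero v (hf'g v h) g' hg')
      rcases Finset.mem_insert.mp hg₁ with h1 | h1 <;>
        rcases Finset.mem_insert.mp hg₂ with h2 | h2
      · exact absurd (h1.trans h2.symm) hne
      · rw [h1]; exact key g₂ h2
      · rw [h2]; intro v; exact (key g₁ h1 v).symm
      · exact hs'disj g₁ h1 g₂ h2 hne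
    · intro v
      constructor
      · intro hv
        by_cases h : g v = 0
        · have hfv : f' v = f v := by simp [hf'def, h]
          obtain ⟨g', hg', hval⟩ := (hs'cov v).1 (by rw [hfv]; exact hv)
          exact ⟨g', Finset.mem_insert_of_mem hg', by rw [hval, hfv]⟩
        · exact ⟨g, Finset.mem_insert_self _ _, (hgExt v h).symm⟩
      · intro hv g' hg'
        have hgv : g v = 0 := by
          by_contra h
          exact h ((hgExt v h).symm.trans hv)
        rcases Finset.mem_insert.mp hg' with h | h
        · rw [h]; exact hgv
        · exact hs'zero v (by simp [hf'def, hgv, hv]) g' h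

/-- For a weakly separable finite cc0-language `Γ` and an instance `I` of
`CSP(Γ)`, every satisfying assignment `f` of `I` is the union of a finite family of
pairwise disjoint minimal satisfying assignments. -/
theorem statement2 {D : Type*} [Zero D] [Fintype D] {V : Type*} [Fintype V]
    (Γ : Lang D) (hΓfin : Γ.Finite) (hcc0 : IsCC0 Γ) (hws : WeaklySep Γ)
    (I : CSPInstance D V) (hI : I.InLang Γ) (f : V → D) (hf : I.Sat f) :
    ∃ s : Finset (V → D),
      (∀ g ∈ s, MinSatAssign I g) ∧
      (∀ g₁ ∈ s, ∀ g₂ ∈ s, g₁ ≠ g₂ → DisjTup g₁ g₂) ∧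
      (∀ v : V, (f v ≠ 0 → ∃ g ∈ s, g v = f v) ∧ (f v = 0 → ∀ g ∈ s, g v = 0)) := by
  exact statement2_key Γ hws I hI (sizeA f) f le_rfl hf

end CSPPaper
end

section
/- Let Γ be a weakly separable finite cc0-language over D and I an instance of CSP(Γ). If there is a satisfying assignment f of I with f(v) = d for some variable v and some nonzero d ∈ D, then there is a minimal satisfying assignment f' of I with f'(v) = d. -/
/-!
Common definitions for formalizing "Constraint satisfaction parameterized by
solution size" (Bulatov, Marx).  The finite domain `D` has a distinguished
element `0`.  A constraint language is a set of (arity, relation) pairs.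
-/

namespace CSPPaper

variable {D : Type*} {V : Type*}

/-- For a weakly separable finite cc0-language `Γ` and an instance `I` of
`CSP(Γ)`, if some satisfying assignment gives value `d ≠ 0` to variable `v`, then some
minimal satisfying assignment gives value `d` to `v`. -/
theorem statement3 {D : Type*} [Zero D] [Fintype D] {V : Type*} [Fintype V]
    (Γ : Lang D) (hΓfin : Γ.Finite) (hcc0 : IsCC0 Γ) (hws : WeaklySep Γ)
    (I : CSPInstance D V) (hI : I.InLang Γ) (v : V) (d : D) (hd : d ≠ 0)
    (hex : ∃ f : V → D, I.Sat f ∧ f v = d) :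
    ∃ f' : V → D, MinSatAssign I f' ∧ f' v = d := by
  classical
  obtain ⟨f, hf, hfv⟩ := hex
  set T : Set ℕ := {n | ∃ g : V → D, I.Sat g ∧ g v = d ∧ sizeA g = n} with hT
  have hTne : T.Nonempty := ⟨sizeA f, f, hf, hfv, rfl⟩
  obtain ⟨g, hg, hgv, hgn⟩ := Nat.sInf_mem hTne
  refine ⟨g, ⟨hg, ?_, ?_⟩, hgv⟩
  · intro h0
    apply hd
    rw [← hgv, congrFun h0 v]
  intro g' hg' hg'0 hext
  by_contra hne
  -- support of g' is strictly contained in support of g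
  have hsub : {w | g' w ≠ 0} ⊆ {w | g w ≠ 0} := by
    intro w hw
    simp only [Set.mem_setOf_eq] at *
    rw [hext w hw]; exact hw
  by_cases hv : g' v = 0
  · -- subtract g' from g, using weak separability (difference)
    set h : V → D := fun w => if g' w = 0 then g w else 0 with hh
    have hhsat : I.Sat h := by
      intro c hc
      have hR := hws ⟨c.1, c.2.2⟩ (hI c hc)
      have hdisj : DisjTup (fun i => h (c.2.1 i)) (fun i => g' (c.2.1 i)) := by
        intro i
        by_cases hgi : g' (c.2.1 i) = 0
        · exact Or.inr hgi
        · left; simp [hh, hgi]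
      have huni : unionTup (fun i => h (c.2.1 i)) (fun i => g' (c.2.1 i))
          = fun i => g (c.2.1 i) := by
        funext i
        simp only [unionTup, hh]
        by_cases hgi : g' (c.2.1 i) = 0
        · simp only [hgi, if_true]
          by_cases hgz : g (c.2.1 i) = 0
          · simp [hgz]
          · simp [hgz]
        · simp only [hgi, if_false, if_pos rfl]
          exact (hext _ hgi).symm
      exact hR.2 _ _ hdisj (hg' c hc) (huni ▸ hg c hc)
    have hhv : h v = d := by simp [hh, hv, hgv]
    -- strict size decrease
    obtain ⟨w, hw⟩ := Function.ne_iff.mp hg'0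
    have hgw : g w ≠ 0 := by rw [hext w hw]; exact hw
    have hss : {x | h x ≠ 0} ⊂ {x | g x ≠ 0} := by
      constructor
      · intro x hx
        simp only [Set.mem_setOf_eq, hh] at hx ⊢
        by_cases hgx : g' x = 0
        · simpa [hgx] using hx
        · simp [hgx] at hx
      · intro hcon
        have := hcon hgw
        simp only [Set.mem_setOf_eq, hh, hw, if_neg hw] at this
        exact this rfl
    have hlt : sizeA h < sizeA g :=
      Set.ncard_lt_ncard hss (Set.toFinite _)
    have := Nat.sInf_le (show sizeA h ∈ T from ⟨h, hhsat, hhv, rfl⟩)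
    omega
  · -- g' v ≠ 0, so g' v = d, contradicting minimality of g
    have hg'v : g' v = d := by rw [← hext v hv]; exact hgv
    have hss : {x | g' x ≠ 0} ⊂ {x | g x ≠ 0} := by
      refine ⟨hsub, fun hcon => hne ?_⟩
      funext x
      by_cases hx : g' x = 0
      · by_contra hgx
        have hgx' : g x ≠ 0 := fun h0 => hgx (hx.trans h0.symm)
        exact (hcon hgx') hx
      · exact (hext x hx).symm
    have hlt : sizeA g' < sizeA g :=
      Set.ncard_lt_ncard hss (Set.toFinite _)
    have := Nat.sInf_le (show sizeA g' ∈ T from ⟨g', hg', hg'v, rfl⟩)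
    omega

end CSPPaper
end

section
/- Let Γ be a constraint language over D and x, y ∈ dom(Γ). If Γ has an endomorphism h with h(x) = y, then the type of x is at most the type of y (with types ordered 1 ≤ 2 ≤ 3 ≤ 4). -/
/-!
Common definitions for formalizing "Constraint satisfaction parameterized by
solution size" (Bulatov, Marx).  The finite domain `D` has a distinguished
element `0`.  A constraint language is a set of (arity, relation) pairs.
-/

namespace CSPPaper

variable {D : Type*} {V : Type*}

/-- Pointwise sub-maps of a multivalued morphism (sending 0 to {0}) are
multivalued morphisms. -/
lemma IsMVM.sub [Zero D] {Γ : Lang D} {φ ψ : D → Set D} (hφ : IsMVM Γ φ)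
    (hψ0 : ψ 0 = {0}) (hsub : ∀ z, ψ z ⊆ φ z) : IsMVM Γ ψ := by
  refine ⟨hψ0, fun R hR t ht s hs => hφ.2 R hR t ht s fun i => hsub _ (hs i)⟩

/-- Post-composing a multivalued morphism with an endomorphism yields a
multivalued morphism. -/
lemma IsMVM.image [Zero D] {Γ : Lang D} {φ : D → Set D} {h : D → D}
    (hφ : IsMVM Γ φ) (hh : IsEndo Γ h) : IsMVM Γ (fun z => h '' φ z) := by
  obtain ⟨h0, hR⟩ := hh
  obtain ⟨φ0, φR⟩ := hφ
  constructor
  · simp [φ0, h0]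
  · intro R hRΓ t ht s hs
    choose u hu1 hu2 using hs
    have hu : u ∈ R.2 := φR R hRΓ t ht u hu1
    have hs' : s = fun i => h (u i) := funext fun i => (hu2 i).symm
    rw [hs']
    exact hR R hRΓ u hu

/-- Pre-composing a multivalued morphism with an endomorphism yields a
multivalued morphism. -/
lemma IsMVM.precomp [Zero D] {Γ : Lang D} {φ : D → Set D} {h : D → D}
    (hφ : IsMVM Γ φ) (hh : IsEndo Γ h) : IsMVM Γ (fun z => φ (h z)) := by
  refine ⟨by simp [hh.1, hφ.1], fun R hR t ht s hs => ?_⟩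
  exact hφ.2 R hR _ (hh.2 R hR t ht) s hs

/-- `0` belongs to every value of a producing morphism. -/
lemma produces_zero_mem [Zero D] {φ : D → Set D} {x y : D}
    (hx : φ x = {0, y}) (ho : ∀ z, z ≠ x → φ z = {0}) (w : D) : (0 : D) ∈ φ w := by
  by_cases hw : w = x
  · subst hw; rw [hx]; exact Set.mem_insert _ _
  · rw [ho w hw]; rfl

/-- Producing is transitive. -/
lemma Produces.trans [Zero D] {Γ : Lang D} {a b c : D}
    (h1 : Produces Γ a b) (h2 : Produces Γ b c) : Produces Γ a c := by
  obtain ⟨φ1, hφ1, hφ1a, hφ1o⟩ := h1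
  obtain ⟨φ2, hφ2, hφ2b, hφ2o⟩ := h2
  refine ⟨fun z => ⋃ w ∈ φ1 z, φ2 w, ⟨?_, ?_⟩, ?_, ?_⟩
  · show (⋃ w ∈ φ1 0, φ2 w) = {0}
    rw [hφ1.1]
    simp [hφ2.1]
  · intro R hR t ht s hs
    simp only [Set.mem_iUnion] at hs
    choose u hu1 hu2 using hs
    have hu : u ∈ R.2 := hφ1.2 R hR t ht u hu1
    exact hφ2.2 R hR u hu s hu2
  · show (⋃ w ∈ φ1 a, φ2 w) = {0, c}
    rw [hφ1a]
    have h20 : φ2 0 = {0} := hφ2.1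
    ext w
    simp only [Set.mem_insert_iff, Set.mem_iUnion]
    constructor
    · rintro ⟨v, (rfl | hv), hw⟩
      · left; simpa [h20] using hw
      · simp only [Set.mem_singleton_iff] at hv; subst hv
        rw [hφ2b] at hw
        simpa using hw
    · rintro (rfl | rfl)
      · exact ⟨0, Or.inl rfl, by simp [h20]⟩
      · exact ⟨b, Or.inr rfl, by rw [hφ2b]; exact Set.mem_insert_of_mem _ rfl⟩
  · intro z hz
    show (⋃ w ∈ φ1 z, φ2 w) = {0}
    rw [hφ1o z hz]
    simp [hφ2.1]

/-- Producing is preserved by applying an endomorphism to the produced value. -/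
lemma Produces.map [Zero D] {Γ : Lang D} {a b : D} {h : D → D}
    (hp : Produces Γ a b) (hh : IsEndo Γ h) : Produces Γ a (h b) := by
  obtain ⟨φ, hφ, hφa, hφo⟩ := hp
  refine ⟨fun z => h '' φ z, hφ.image hh, ?_, ?_⟩
  · show h '' φ a = {0, h b}
    rw [hφa]
    simp [Set.image_insert_eq, hh.1]
  · intro z hz
    show h '' φ z = {0}
    rw [hφo z hz]
    simp [hh.1]

/-- If `h x = y` and `y` produces `b`, then `x` produces `b`. -/
lemma Produces.pullback [Zero D] {Γ : Lang D} {x y b : D} {h : D → D}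
    (hh : IsEndo Γ h) (hxy : h x = y) (hp : Produces Γ y b) : Produces Γ x b := by
  classical
  obtain ⟨φ, hφ, hφy, hφo⟩ := hp
  have h0mem : ∀ w, (0 : D) ∈ φ w := produces_zero_mem hφy hφo
  refine ⟨fun z => if z = x then ({0, b} : Set D) else {0}, ?_, by simp, ?_⟩
  · refine (hφ.precomp hh).sub ?_ ?_
    · show (if (0 : D) = x then ({0, b} : Set D) else {0}) = {0}
      by_cases h0x : (0 : D) = x
      · -- then y = h 0 = 0 and hence b = 0
        have hy0 : y = 0 := by rw [← hxy, ← h0x, hh.1]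
        have hb : b = 0 := by
          have h1 : ({0, b} : Set D) = {0} := by rw [← hφy, hy0, hφ.1]
          have h2 : b ∈ ({0, b} : Set D) := by simp
          rw [h1] at h2
          simpa using h2
        rw [if_pos h0x, hb]
        simp
      · rw [if_neg h0x]
    · intro z
      by_cases hz : z = x
      · subst hz
        show (if z = z then ({0, b} : Set D) else {0}) ⊆ φ (h z)
        rw [if_pos rfl, hxy, hφy]
      · simp only [if_neg hz, Set.singleton_subset_iff]
        exact h0mem _
  · intro z hz
    simp [hz]

/-- Non-regularity is transported along endomorphisms. -/
lemma not_regular_map [Zero D] {Γ : Lang D} {x y : D} {h : D → D}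
    (hh : IsEndo Γ h) (hxy : h x = y) (hx : ¬ IsRegular Γ x) : ¬ IsRegular Γ y := by
  rw [IsRegular, not_not] at hx ⊢
  obtain ⟨φ, x', hφ, hx'dom, h0, hxmem⟩ := hx
  exact ⟨fun z => h '' φ z, x', hφ.image hh, hx'dom,
    ⟨0, h0, hh.1⟩, ⟨x, hxmem, hxy⟩⟩

lemma typeOf_le_four [Zero D] (Γ : Lang D) (x : D) : typeOf Γ x ≤ 4 := by
  unfold typeOf
  split_ifs <;> norm_num

/-- If `Γ` has an endomorphism `h` with `h x = y` (for `x, y ∈ dom Γ`),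
then the type of `x` is at most the type of `y`. -/
theorem statement4 {D : Type*} [Zero D] [Fintype D]
    (Γ : Lang D) (hΓfin : Γ.Finite) (x y : D) (hx : x ∈ dom Γ) (hy : y ∈ dom Γ)
    (h : D → D) (hh : IsEndo Γ h) (hxy : h x = y) :
    typeOf Γ x ≤ typeOf Γ y := by
  by_cases hyr : IsRegular Γ y
  · -- then x is regular, too
    have hxr : IsRegular Γ x := by
      intro hcon
      exact (not_regular_map hh hxy (not_not.mpr hcon)) hyr
    simp [typeOf, hxr, hyr]
  · by_cases hys : IsSemiregular Γ y
    · -- type y = 2; show type x ≤ 2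
      have hy2 : typeOf Γ y = 2 := by simp [typeOf, hyr, hys]
      rw [hy2]
      by_cases hxr : IsRegular Γ x
      · simp [typeOf, hxr]
      · have hxs : IsSemiregular Γ x := by
          refine ⟨not_not.mp hxr, ?_⟩
          rintro ⟨x', hx'dom, hprod⟩
          exact hys.2 ⟨x', hx'dom, hxy ▸ hprod.map hh⟩
        simp [typeOf, hxr, hxs]
    · by_cases hysp : IsSelfProducing Γ y
      · -- type y = 3; show type x ≤ 3
        have hy3 : typeOf Γ y = 3 := by simp [typeOf, hyr, hys, hysp]
        rw [hy3]
        by_cases hxr : IsRegular Γ x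
        · simp [typeOf, hxr]
        · by_cases hxs : IsSemiregular Γ x
          · simp [typeOf, hxr, hxs]
          · -- x has a producer, and we show x is self-producing
            have hfirst := not_not.mp hxr
            have hex : ∃ x' ∈ dom Γ, Produces Γ x' x := by
              by_contra hc
              exact hxs ⟨hfirst, hc⟩
            obtain ⟨x', hx'dom, hx'x⟩ := hex
            -- y produces x
            have hx'y : Produces Γ x' y := hxy ▸ hx'x.map hh
            have hyx' : Produces Γ y x' := hysp.2 x' hx'dom hx'y
            have hyx : Produces Γ y x := hyx'.trans hx'x
            have hxsp : IsSelfProducing Γ x := by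
              refine ⟨hyx.pullback hh hxy, ?_⟩
              intro x'' hx''dom hx''x
              have hx''y : Produces Γ x'' y := hxy ▸ hx''x.map hh
              have hyx'' : Produces Γ y x'' := hysp.2 x'' hx''dom hx''y
              exact hyx''.pullback hh hxy
            simp [typeOf, hxr, hxs, hxsp]
      · -- type y = 4
        have hy4 : typeOf Γ y = 4 := by simp [typeOf, hyr, hys, hysp]
        rw [hy4]
        exact typeOf_le_four Γ x

end CSPPaper
end

section
/- Let Γ be a constraint language over D. Every degenerate value y ∈ dom(Γ) is produced in Γ by some nondegenerate value x ∈ dom(Γ). -/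
/-!
Common definitions for formalizing "Constraint satisfaction parameterized by
solution size" (Bulatov, Marx).  The finite domain `D` has a distinguished
element `0`.  A constraint language is a set of (arity, relation) pairs.
-/

namespace CSPPaper

variable {D : Type*} {V : Type*}

/-- Production is transitive: compose the two multivalued morphisms. -/
lemma produces_trans' {D : Type*} [Zero D] (Γ : Lang D) {x y z : D}
    (h1 : Produces Γ x y) (h2 : Produces Γ y z) : Produces Γ x z := by
  obtain ⟨φ, ⟨hφ0, hφR⟩, hφx, hφe⟩ := h1
  obtain ⟨ψ, ⟨hψ0, hψR⟩, hψy, hψe⟩ := h2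
  refine ⟨fun w => ⋃ v ∈ φ w, ψ v, ⟨?_, ?_⟩, ?_, ?_⟩
  · show ⋃ v ∈ φ 0, ψ v = {0}
    rw [hφ0]; simp [hψ0]
  · intro R hR t ht s hs
    have h := fun i => Set.mem_iUnion₂.1 (hs i)
    choose v hv hsv using h
    exact hψR R hR v (hφR R hR t ht v hv) s hsv
  · show ⋃ v ∈ φ x, ψ v = {0, z}
    rw [hφx]
    ext a
    simp only [Set.mem_iUnion, Set.mem_insert_iff, Set.mem_singleton_iff,
      exists_prop]
    constructor
    · rintro ⟨v, (rfl | rfl), hav⟩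
      · rw [hψ0] at hav; simp at hav; exact Or.inl hav
      · rw [hψy] at hav; simpa using hav
    · rintro (rfl | rfl)
      · exact ⟨0, Or.inl rfl, by rw [hψ0]; rfl⟩
      · exact ⟨y, Or.inr rfl, by rw [hψy]; exact Or.inr rfl⟩
  · intro w hw
    show ⋃ v ∈ φ w, ψ v = {0}
    rw [hφe w hw]
    simp [hψ0]

/-- Every degenerate value has a producer in `dom Γ`. -/
lemma deg_producer' {D : Type*} [Zero D] (Γ : Lang D) {x : D}
    (hx : IsDegenerate Γ x) : ∃ u ∈ dom Γ, Produces Γ u x := by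
  obtain ⟨hreg, hsemi, _⟩ := hx
  rw [IsRegular, not_not] at hreg
  by_contra h
  exact hsemi ⟨hreg, h⟩

/-- Every degenerate value of `dom Γ` is produced by some nondegenerate
value of `dom Γ`. -/
theorem statement5 {D : Type*} [Zero D] [Fintype D]
    (Γ : Lang D) (hΓfin : Γ.Finite) (y : D) (hy : y ∈ dom Γ)
    (hdeg : IsDegenerate Γ y) :
    ∃ x ∈ dom Γ, ¬ IsDegenerate Γ x ∧ Produces Γ x y := by
  classical
  set r : D → D → Prop :=
    fun u v => Produces Γ u v ∧ ¬ Produces Γ v u ∧ u ≠ v with hr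
  haveI : IsTrans D r := ⟨by
    rintro a b c ⟨pab, nba, neab⟩ ⟨pbc, ncb, nebc⟩
    refine ⟨produces_trans' Γ pab pbc,
      fun pca => ncb (produces_trans' Γ pca pab), fun h => nba ?_⟩
    rw [h]; exact pbc⟩
  haveI : IsIrrefl D r := ⟨fun a ha => ha.2.2 rfl⟩
  have hwf : WellFounded r := Finite.wellFounded_of_trans_of_irrefl r
  set T : Set D := {x | x ∈ dom Γ ∧ Produces Γ x y} with hT
  have hTne : T.Nonempty := by
    obtain ⟨u, hu, hp⟩ := deg_producer' Γ hdeg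
    exact ⟨u, hu, hp⟩
  obtain ⟨x, ⟨hxdom, hxy⟩, hmin⟩ := hwf.has_min T hTne
  refine ⟨x, hxdom, ?_, hxy⟩
  intro hxdeg
  obtain ⟨u, hudom, hux⟩ := deg_producer' Γ hxdeg
  have huT : u ∈ T := ⟨hudom, produces_trans' Γ hux hxy⟩
  have h1 : Produces Γ x x := by
    by_cases hxu : x = u
    · rw [hxu]; exact hxu ▸ hux
    · have hxu' : Produces Γ x u := by
        by_contra hc
        exact (hmin u huT) ⟨hux, hc, fun h => hxu h.symm⟩
      exact produces_trans' Γ hxu' hux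
  have h2 := hxdeg.2.2
  rw [IsSelfProducing] at h2
  push_neg at h2
  obtain ⟨w, hwdom, hwx, hnxw⟩ := h2 h1
  have hwT : w ∈ T := ⟨hwdom, produces_trans' Γ hwx hxy⟩
  by_cases hwx' : w = x
  · rw [hwx'] at hwx; exact hnxw (hwx'.symm ▸ hwx)
  · exact (hmin w hwT) ⟨hwx, hnxw, hwx'⟩

end CSPPaper
end

section
/- Let Γ be a cc0-language over D, R ∈ Γ, and h an endomorphism of Γ. If t_1 and t_2 are disjoint tuples such that t_1 ∈ R and t_1+t_2 ∈ R, then t_1 + h(t_2) ∈ R, where h(t_2) denotes the coordinatewise image of t_2 under h. -/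
/-!
Common definitions for formalizing "Constraint satisfaction parameterized by
solution size" (Bulatov, Marx).  The finite domain `D` has a distinguished
element `0`.  A constraint language is a set of (arity, relation) pairs.
-/

namespace CSPPaper

variable {D : Type*} {V : Type*}

/-- For a cc0-language `Γ`, `R ∈ Γ`, an endomorphism `h` of `Γ` and
disjoint tuples `t₁, t₂` with `t₁ ∈ R` and `t₁+t₂ ∈ R`, we have `t₁ + h(t₂) ∈ R`. -/
theorem statement6 {D : Type*} [Zero D] [Fintype D]
    (Γ : Lang D) (hΓfin : Γ.Finite) (hcc0 : IsCC0 Γ)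
    (R : Σ n : ℕ, Set (Fin n → D)) (hR : R ∈ Γ)
    (h : D → D) (hh : IsEndo Γ h)
    (t₁ t₂ : Fin R.1 → D) (hdisj : DisjTup t₁ t₂)
    (ht₁ : t₁ ∈ R.2) (ht₁₂ : unionTup t₁ t₂ ∈ R.2) :
    unionTup t₁ (fun i => h (t₂ i)) ∈ R.2 := by
  classical
  obtain ⟨hz, hsub⟩ := hcc0
  obtain ⟨h0, hend⟩ := hh
  set s : Finset (Fin R.1) := Finset.univ.filter (fun i => t₁ i = 0) with hs
  set e : Fin s.card ↪o Fin R.1 :=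
    (s.orderIsoOfFin rfl).toOrderEmbedding.trans
      (OrderEmbedding.subtype (fun x => x ∈ s)) with he
  have hes : ∀ i, t₁ (e i) = 0 := by
    intro i
    have hmem := ((s.orderIsoOfFin rfl) i).2
    exact (Finset.mem_filter.mp hmem).2
  have hsurj : ∀ j : Fin R.1, t₁ j = 0 → ∃ i, e i = j := by
    intro j hj
    have hjs : j ∈ s := by simp [hs, hj]
    refine ⟨(s.orderIsoOfFin rfl).symm ⟨j, hjs⟩, ?_⟩
    simp [he]
  have key : ∀ u : Fin R.1 → D, (∀ j, t₁ j ≠ 0 → u j = t₁ j) →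
      extendTup (fun i => e i) t₁ (fun i => u (e i)) = u := by
    intro u hu
    funext j
    unfold extendTup
    split
    · next hj => exact congrArg u hj.choose_spec
    · next hj =>
      by_cases h1 : t₁ j = 0
      · exact absurd (hsurj j h1) hj
      · exact (hu j h1).symm
  have hzero : ZeroValid (substRel R.2 e t₁) := by
    show extendTup (fun i => e i) t₁ (fun _ => (0 : D)) ∈ R.2
    have h1 : (fun _ => (0 : D)) = fun i => t₁ (e i) := by
      funext i; exact (hes i).symm
    rw [h1, key t₁ (fun j _ => rfl)]
    exact ht₁
  have hR' := hsub R hR s.card e t₁ hzero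
  have ht2 : (fun i => t₂ (e i)) ∈ substRel R.2 e t₁ := by
    show extendTup (fun i => e i) t₁ (fun i => t₂ (e i)) ∈ R.2
    have h1 : (fun i => t₂ (e i)) = fun i => unionTup t₁ t₂ (e i) := by
      funext i; simp [unionTup, hes i]
    rw [h1, key _ (fun j hj => by simp [unionTup, hj])]
    exact ht₁₂
  have hht2 := hend ⟨s.card, substRel R.2 e t₁⟩ hR' (fun i => t₂ (e i)) ht2
  have hmem : extendTup (fun i => e i) t₁ (fun i => h (t₂ (e i))) ∈ R.2 := hht2
  have h1 : (fun i => h (t₂ (e i))) =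
      fun i => unionTup t₁ (fun j => h (t₂ j)) (e i) := by
    funext i; simp [unionTup, hes i]
  rw [h1, key _ (fun j hj => by simp [unionTup, hj])] at hmem
  exact hmem

end CSPPaper
end

section
/- Let Γ be a cc0-language over D, R ∈ Γ, and φ a multivalued morphism of Γ. If t_1 and t_2 are disjoint tuples such that t_1 ∈ R and t_1+t_2 ∈ R, then t_1 + t_2' ∈ R for every tuple t_2' ∈ φ(t_2). -/
/-!
Common definitions for formalizing "Constraint satisfaction parameterized by
solution size" (Bulatov, Marx).  The finite domain `D` has a distinguished
element `0`.  A constraint language is a set of (arity, relation) pairs.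
-/

namespace CSPPaper

variable {D : Type*} {V : Type*}

/-- For a cc0-language `Γ`, `R ∈ Γ`, a multivalued morphism `φ` of `Γ` and
disjoint tuples `t₁, t₂` with `t₁ ∈ R` and `t₁+t₂ ∈ R`, we have `t₁ + t₂' ∈ R` for
every tuple `t₂' ∈ φ(t₂)`. -/
theorem statement7 {D : Type*} [Zero D] [Fintype D]
    (Γ : Lang D) (hΓfin : Γ.Finite) (hcc0 : IsCC0 Γ)
    (R : Σ n : ℕ, Set (Fin n → D)) (hR : R ∈ Γ)
    (φ : D → Set D) (hφ : IsMVM Γ φ)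
    (t₁ t₂ : Fin R.1 → D) (hdisj : DisjTup t₁ t₂)
    (ht₁ : t₁ ∈ R.2) (ht₁₂ : unionTup t₁ t₂ ∈ R.2)
    (t₂' : Fin R.1 → D) (ht₂' : ∀ i, t₂' i ∈ φ (t₂ i)) :
    unionTup t₁ t₂' ∈ R.2 := by
  classical
  let s : Finset (Fin R.1) := Finset.univ.filter (fun j => t₁ j = 0)
  let e : Fin s.card ↪o Fin R.1 := s.orderEmbOfFin rfl
  have hrange : ∀ j, (∃ i, e i = j) ↔ t₁ j = 0 := by
    intro j
    constructor
    · rintro ⟨i, rfl⟩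
      exact (Finset.mem_filter.mp (Finset.orderEmbOfFin_mem s rfl i)).2
    · intro hj
      have hjs : j ∈ s := Finset.mem_filter.mpr ⟨Finset.mem_univ j, hj⟩
      have : j ∈ Set.range (s.orderEmbOfFin rfl) := by
        rw [Finset.range_orderEmbOfFin]; exact_mod_cast hjs
      obtain ⟨i, hi⟩ := this
      exact ⟨i, hi⟩
  have key : ∀ u : Fin R.1 → D,
      extendTup (fun i => e i) t₁ (fun i => u (e i))
        = fun j => if t₁ j = 0 then u j else t₁ j := by
    intro u
    funext j
    unfold extendTup
    by_cases h : ∃ i, e i = j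
    · rw [dif_pos h]
      have hj : t₁ j = 0 := (hrange j).1 h
      have hc : e h.choose = j := h.choose_spec
      simp only [hc, hj, if_true]
    · rw [dif_neg h]
      have hj : t₁ j ≠ 0 := fun hj => h ((hrange j).2 hj)
      simp [hj]
  have hzero : ZeroValid (substRel R.2 e t₁) := by
    show extendTup (fun i => e i) t₁ (fun _ => (0 : D)) ∈ R.2
    rw [key (fun _ => (0 : D))]
    have : (fun j => if t₁ j = 0 then (0 : D) else t₁ j) = t₁ := by
      funext j; by_cases h : t₁ j = 0 <;> simp [h]
    rw [this]; exact ht₁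
  have hmemΓ : (⟨s.card, substRel R.2 e t₁⟩ : Σ k : ℕ, Set (Fin k → D)) ∈ Γ :=
    hcc0.2 R hR s.card e t₁ hzero
  have hmem₂ : (fun i => t₂ (e i)) ∈ substRel R.2 e t₁ := by
    show extendTup (fun i => e i) t₁ (fun i => t₂ (e i)) ∈ R.2
    rw [key t₂]
    exact ht₁₂
  have hmem₂' : (fun i => t₂' (e i)) ∈ substRel R.2 e t₁ :=
    hφ.2 ⟨s.card, substRel R.2 e t₁⟩ hmemΓ (fun i => t₂ (e i)) hmem₂
      (fun i => t₂' (e i)) (fun i => ht₂' (e i))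
  have : extendTup (fun i => e i) t₁ (fun i => t₂' (e i)) ∈ R.2 := hmem₂'
  rwa [key t₂'] at this

end CSPPaper
end

section
/- If C_1 and C_2 are components of a constraint language Γ over D with C_1 ∩ C_2 ≠ ∅, then C_1 ∩ C_2 is a component of Γ. -/
/-!
Common definitions for formalizing "Constraint satisfaction parameterized by
solution size" (Bulatov, Marx).  The finite domain `D` has a distinguished
element `0`.  A constraint language is a set of (arity, relation) pairs.
-/

namespace CSPPaper

variable {D : Type*} {V : Type*}

/-- The intersection of two nondisjoint components of `Γ` is a component. -/
theorem statement8 {D : Type*} [Zero D] [Fintype D]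
    (Γ : Lang D) (hΓfin : Γ.Finite) (C₁ C₂ : Set D)
    (h₁ : IsComponent Γ C₁) (h₂ : IsComponent Γ C₂) (hne : (C₁ ∩ C₂).Nonempty) :
    IsComponent Γ (C₁ ∩ C₂) := by
  obtain ⟨-, hs₁, h01, he₁⟩ := h₁
  obtain ⟨-, hs₂, h02, he₂⟩ := h₂
  have h0C₁ : (0 : D) ∉ C₁ := fun h => (hs₁ h).2 rfl
  have key : ∀ x, prRet (C₁ ∩ C₂) x = prRet C₁ (prRet C₂ x) := by
    intro x
    by_cases hx2 : x ∈ C₂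
    · by_cases hx1 : x ∈ C₁
      · simp [prRet, hx1, hx2]
      · simp [prRet, hx1, hx2, fun h : x ∈ C₁ ∩ C₂ => hx1 h.1]
    · simp [prRet, hx2, fun h : x ∈ C₁ ∩ C₂ => hx2 h.2, h0C₁]
  refine ⟨hne, fun x hx => hs₁ hx.1, ?_, ?_⟩
  · rw [key, h02, h01]
  · intro R hR t ht
    have := he₁ R hR _ (he₂ R hR t ht)
    simpa [key] using this

end CSPPaper
end

section
/- If Γ is a cc0-language over D, then the union of any two components of Γ is a component of Γ. -/
/-!
Common definitions for formalizing "Constraint satisfaction parameterized by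
solution size" (Bulatov, Marx).  The finite domain `D` has a distinguished
element `0`.  A constraint language is a set of (arity, relation) pairs.
-/

namespace CSPPaper

variable {D : Type*} {V : Type*}

lemma extendTup_apply_of_mem {n m : ℕ} (e : Fin m → Fin n)
    (he : Function.Injective e) (c : Fin n → D) (u : Fin m → D) (i : Fin m) :
    extendTup e c u (e i) = u i := by
  have h : ∃ i', e i' = e i := ⟨i, rfl⟩
  simp only [extendTup, dif_pos h]
  congr 1
  exact he h.choose_spec

lemma extendTup_apply_of_not_mem {n m : ℕ} (e : Fin m → Fin n)
    (c : Fin n → D) (u : Fin m → D) (j : Fin n) (hj : ¬ ∃ i, e i = j) :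
    extendTup e c u j = c j := dif_neg hj

lemma prRet_union_mem {D : Type*} [Zero D]
    (Γ : Lang D) (hcc0 : IsCC0 Γ) (C₁ C₂ : Set D)
    (he₁ : ∀ R ∈ Γ, ∀ t ∈ R.2, (fun i => prRet C₁ (t i)) ∈ R.2)
    (he₂ : ∀ R ∈ Γ, ∀ t ∈ R.2, (fun i => prRet C₂ (t i)) ∈ R.2)
    (n : ℕ) (Rn : Set (Fin n → D))
    (hR : (⟨n, Rn⟩ : Σ k : ℕ, Set (Fin k → D)) ∈ Γ)
    (t : Fin n → D) (ht : t ∈ Rn) :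
    (fun i => prRet (C₁ ∪ C₂) (t i)) ∈ Rn := by
  classical
  let s : Finset (Fin n) := Finset.univ.filter (fun j => t j ∉ C₁)
  let e : Fin s.card ↪o Fin n := s.orderEmbOfFin rfl
  have hemem : ∀ i, t (e i) ∉ C₁ := by
    intro i
    have h : e i ∈ s := s.orderEmbOfFin_mem rfl i
    exact (Finset.mem_filter.mp h).2
  have henot : ∀ j : Fin n, (¬ ∃ i, (e i : Fin n) = j) → t j ∈ C₁ := by
    intro j hj
    by_contra hjc
    have hjs : j ∈ s := Finset.mem_filter.mpr ⟨Finset.mem_univ j, hjc⟩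
    have hr : j ∈ Set.range (fun i => (e i : Fin n)) := by
      rw [show (Set.range fun i => (e i : Fin n)) = ↑s from s.range_orderEmbOfFin rfl]
      exact hjs
    exact hj hr
  have heinj : Function.Injective (fun i => (e i : Fin n)) := e.injective
  have hzv : ZeroValid (substRel Rn e t) := by
    have hkey : extendTup (fun i => (e i : Fin n)) t (fun _ => (0 : D))
        = fun j => prRet C₁ (t j) := by
      funext j
      by_cases hj : ∃ i, (e i : Fin n) = j
      · obtain ⟨i, rfl⟩ := hj
        rw [extendTup_apply_of_mem _ heinj]
        simp [prRet, hemem i]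
      · rw [extendTup_apply_of_not_mem _ _ _ _ hj]
        simp [prRet, henot j hj]
    show extendTup (fun i => (e i : Fin n)) t (fun _ => (0 : D)) ∈ Rn
    rw [hkey]
    exact he₁ ⟨n, Rn⟩ hR t ht
  have hRsub : (⟨s.card, substRel Rn e t⟩ : Σ k : ℕ, Set (Fin k → D)) ∈ Γ :=
    hcc0.2 ⟨n, Rn⟩ hR s.card e t hzv
  have ht' : (fun i => t (e i)) ∈ substRel Rn e t := by
    show extendTup (fun i => (e i : Fin n)) t (fun i => t (e i)) ∈ Rn
    have heq : extendTup (fun i => (e i : Fin n)) t (fun i => t (e i)) = t := by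
      funext j
      by_cases hj : ∃ i, (e i : Fin n) = j
      · obtain ⟨i, rfl⟩ := hj
        rw [extendTup_apply_of_mem _ heinj]
      · rw [extendTup_apply_of_not_mem _ _ _ _ hj]
    rwa [heq]
  have hmem := he₂ ⟨s.card, substRel Rn e t⟩ hRsub _ ht'
  have hfinal : extendTup (fun i => (e i : Fin n)) t
      (fun i => prRet C₂ (t (e i))) = fun j => prRet (C₁ ∪ C₂) (t j) := by
    funext j
    by_cases hj : ∃ i, (e i : Fin n) = j
    · obtain ⟨i, rfl⟩ := hj
      rw [extendTup_apply_of_mem _ heinj]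
      by_cases hc : t (e i) ∈ C₂
      · simp [prRet, hc]
      · simp [prRet, hc, hemem i]
    · rw [extendTup_apply_of_not_mem _ _ _ _ hj]
      simp [prRet, henot j hj]
  have hm : extendTup (fun i => (e i : Fin n)) t
      (fun i => prRet C₂ (t (e i))) ∈ Rn := hmem
  rwa [hfinal] at hm

/-- For a cc0-language, the union of two components is a component. -/
theorem statement9 {D : Type*} [Zero D] [Fintype D]
    (Γ : Lang D) (hΓfin : Γ.Finite) (hcc0 : IsCC0 Γ) (C₁ C₂ : Set D)
    (h₁ : IsComponent Γ C₁) (h₂ : IsComponent Γ C₂) :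
    IsComponent Γ (C₁ ∪ C₂) := by
  obtain ⟨hne₁, hsub₁, he₁0, he₁⟩ := h₁
  obtain ⟨hne₂, hsub₂, he₂0, he₂⟩ := h₂
  have h0₁ : (0 : D) ∉ C₁ := fun h => (hsub₁ h).2 rfl
  have h0₂ : (0 : D) ∉ C₂ := fun h => (hsub₂ h).2 rfl
  refine ⟨hne₁.mono Set.subset_union_left, Set.union_subset hsub₁ hsub₂, ?_, ?_⟩
  · simp [prRet, h0₁, h0₂]
  · rintro ⟨n, Rn⟩ hR t ht
    exact prRet_union_mem Γ hcc0 C₁ C₂ he₁ he₂ n Rn hR t ht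

end CSPPaper
end

section
/- Let Γ be a cc0-language over D and X ⊆ dom(Γ) \ {0} nonempty. If a value d ∈ dom(Γ) is in the component of Γ generated by X, then there is a value d' ∈ X such that d is in the component of Γ generated by {d'}. -/
/-!
Common definitions for formalizing "Constraint satisfaction parameterized by
solution size" (Bulatov, Marx).  The finite domain `D` has a distinguished
element `0`.  A constraint language is a set of (arity, relation) pairs.
-/

namespace CSPPaper

variable {D : Type*} {V : Type*}

section Statement10Aux

variable {D' : Type*} [Zero D']

lemma prRet_zero' (C : Set D') : prRet C (0 : D') = 0 := by
  unfold prRet; split <;> rfl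

lemma endo_comp' {Γ : Lang D'} {h1 h2 : D' → D'} (H1 : IsEndo Γ h1) (H2 : IsEndo Γ h2) :
    IsEndo Γ (fun x => h1 (h2 x)) :=
  ⟨show h1 (h2 0) = 0 by rw [H2.1, H1.1],
   fun R hR t ht => H1.2 R hR _ (H2.2 R hR t ht)⟩

lemma prRet_comp' (C1 C2 : Set D') :
    (fun x => prRet C1 (prRet C2 x)) = prRet (C1 ∩ C2) := by
  funext x
  by_cases h2 : x ∈ C2
  · by_cases h1 : x ∈ C1 <;> simp [prRet, h1, h2]
  · unfold prRet; rw [if_neg h2, if_neg (show x ∉ C1 ∩ C2 from fun h => h2 h.2)]; split <;> rfl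

lemma isComponent_inter' {Γ : Lang D'} {C1 C2 : Set D'}
    (h1 : IsComponent Γ C1) (h2 : IsComponent Γ C2) (hne : (C1 ∩ C2).Nonempty) :
    IsComponent Γ (C1 ∩ C2) := by
  refine ⟨hne, fun x hx => h1.2.1 hx.1, ?_⟩
  rw [← prRet_comp']
  exact endo_comp' h1.2.2 h2.2.2

lemma extendTup_apply_mem' {n m : ℕ} {e : Fin m → Fin n} (he : Function.Injective e)
    (c : Fin n → D') (s : Fin m → D') {i : Fin m} {j : Fin n} (hij : e i = j) :
    extendTup e c s j = s i := by
  have hex : ∃ i, e i = j := ⟨i, hij⟩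
  unfold extendTup
  rw [dif_pos hex]
  congr 1
  exact he (hex.choose_spec.trans hij.symm)

lemma extendTup_apply_not_mem' {n m : ℕ} {e : Fin m → Fin n}
    (c : Fin n → D') (s : Fin m → D') {j : Fin n} (h : ¬ ∃ i, e i = j) :
    extendTup e c s j = c j := dif_neg h

lemma isComponent_union' {Γ : Lang D'} (hcc0 : IsCC0 Γ) {C1 C2 : Set D'}
    (h1 : IsComponent Γ C1) (h2 : IsComponent Γ C2) :
    IsComponent Γ (C1 ∪ C2) := by
  classical
  refine ⟨h1.1.mono Set.subset_union_left, Set.union_subset h1.2.1 h2.2.1,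
    prRet_zero' _, ?_⟩
  rintro ⟨n, Rrel⟩ hR t ht
  set S : Finset (Fin n) := Finset.univ.filter (fun i => t i ∉ C1) with hSdef
  set e : Fin S.card ↪o Fin n := S.orderEmbOfFin rfl with hedef
  set c : Fin n → D' := fun j => prRet C1 (t j) with hcdef
  have hrange : ∀ j : Fin n, (∃ i, e i = j) ↔ t j ∉ C1 := by
    intro j
    constructor
    · rintro ⟨i, rfl⟩
      have h := Finset.orderEmbOfFin_mem S rfl i
      exact (Finset.mem_filter.mp h).2
    · intro hj
      have hj' : j ∈ S := by simp [hSdef, hj]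
      have : j ∈ Set.range (e : Fin S.card → Fin n) := by
        rw [hedef]
        rw [Finset.range_orderEmbOfFin]
        exact_mod_cast hj'
      exact this
  have heinj : Function.Injective (fun i => (e i : Fin n)) := fun a b hab => e.injective hab
  have hzero : ZeroValid (substRel Rrel e c) := by
    show extendTup (fun i => e i) c (fun _ => (0 : D')) ∈ Rrel
    have heq : extendTup (fun i => e i) c (fun _ => (0 : D')) = fun j => prRet C1 (t j) := by
      funext j
      by_cases hj : ∃ i, (e i : Fin n) = j
      · obtain ⟨i, hi⟩ := hj
        rw [extendTup_apply_mem' heinj c _ hi]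
        have hj1 : t j ∉ C1 := (hrange j).1 ⟨i, hi⟩
        simp [prRet, hj1]
      · rw [extendTup_apply_not_mem' c _ hj]
    rw [heq]
    exact h1.2.2.2 ⟨n, Rrel⟩ hR t ht
  have hmem : (fun i => t (e i)) ∈ substRel Rrel e c := by
    show extendTup (fun i => e i) c (fun i => t (e i)) ∈ Rrel
    have heq : extendTup (fun i => e i) c (fun i => t (e i)) = t := by
      funext j
      by_cases hj : ∃ i, (e i : Fin n) = j
      · obtain ⟨i, hi⟩ := hj
        rw [extendTup_apply_mem' heinj c _ hi, hi]
      · rw [extendTup_apply_not_mem' c _ hj]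
        have hj1 : t j ∈ C1 := not_not.mp ((hrange j).not.mp hj)
        simp [hcdef, prRet, hj1]
    rw [heq]; exact ht
  have hRΓ : (⟨S.card, substRel Rrel e c⟩ : Σ k : ℕ, Set (Fin k → D')) ∈ Γ :=
    hcc0.2 ⟨n, Rrel⟩ hR S.card e c hzero
  have h2app : (fun i => prRet C2 (t (e i))) ∈ substRel Rrel e c :=
    h2.2.2.2 ⟨S.card, substRel Rrel e c⟩ hRΓ _ hmem
  have h2app' : extendTup (fun i => e i) c (fun i => prRet C2 (t (e i))) ∈ Rrel := h2app
  have hfinal : extendTup (fun i => e i) c (fun i => prRet C2 (t (e i)))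
      = fun j => prRet (C1 ∪ C2) (t j) := by
    funext j
    by_cases hj : ∃ i, (e i : Fin n) = j
    · obtain ⟨i, hi⟩ := hj
      rw [extendTup_apply_mem' heinj c _ hi, hi]
      have hj1 : t j ∉ C1 := (hrange j).1 ⟨i, hi⟩
      by_cases hj2 : t j ∈ C2 <;> simp [prRet, hj1, hj2]
    · rw [extendTup_apply_not_mem' c _ hj]
      have hj1 : t j ∈ C1 := not_not.mp ((hrange j).not.mp hj)
      simp [hcdef, prRet, hj1, Set.mem_union, Or.inl hj1]
  rw [hfinal] at h2app'
  exact h2app'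

lemma isComponent_sInter' {Γ : Lang D'} {d' : D'} (S : Set (Set D'))
    (hfin : S.Finite) :
    (∀ C ∈ S, IsComponent Γ C ∧ d' ∈ C) → S.Nonempty →
      IsComponent Γ (⋂₀ S) ∧ d' ∈ ⋂₀ S := by
  refine Set.Finite.induction_on (motive := fun S _ => (∀ C ∈ S, IsComponent Γ C ∧ d' ∈ C) →
      S.Nonempty → IsComponent Γ (⋂₀ S) ∧ d' ∈ ⋂₀ S) S hfin
    (fun _ h => absurd h (by simp)) ?_
  intro C S hCS hfin ih hS hne
  rcases Set.eq_empty_or_nonempty S with h | h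
  · subst h
    simp only [Set.sInter_insert, Set.sInter_empty, Set.inter_univ]
    exact hS C (Set.mem_insert _ _)
  · have ih' := ih (fun C' hC' => hS C' (Set.mem_insert_of_mem _ hC')) h
    have hCcomp := hS C (Set.mem_insert _ _)
    rw [Set.sInter_insert]
    exact ⟨isComponent_inter' hCcomp.1 ih'.1 ⟨d', hCcomp.2, ih'.2⟩, hCcomp.2, ih'.2⟩

lemma isComponent_sUnion' {Γ : Lang D'} (hcc0 : IsCC0 Γ) (T : Set (Set D'))
    (hfin : T.Finite) :
    (∀ C ∈ T, IsComponent Γ C) → T.Nonempty → IsComponent Γ (⋃₀ T) := by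
  refine Set.Finite.induction_on (motive := fun T _ => (∀ C ∈ T, IsComponent Γ C) →
      T.Nonempty → IsComponent Γ (⋃₀ T)) T hfin
    (fun _ h => absurd h (by simp)) ?_
  intro C T hCT hfin ih hT hne
  rcases Set.eq_empty_or_nonempty T with h | h
  · subst h; simpa using hT C (Set.mem_insert _ _)
  · rw [Set.sUnion_insert]
    exact isComponent_union' hcc0 (hT C (Set.mem_insert _ _))
      (ih (fun C' hC' => hT C' (Set.mem_insert_of_mem _ hC')) h)

end Statement10Aux

/-- For a cc0-language `Γ` and nonempty `X ⊆ dom Γ \ {0}`, if `d` lies in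
the component generated by `X`, then `d` lies in the component generated by `{d'}` for
some `d' ∈ X`. -/
theorem statement10 {D : Type*} [Zero D] [Fintype D]
    (Γ : Lang D) (hΓfin : Γ.Finite) (hcc0 : IsCC0 Γ)
    (X : Set D) (hXne : X.Nonempty) (hX : X ⊆ dom Γ \ {0})
    (C : Set D) (hC : GenComponent Γ X C) (d : D) (hd : d ∈ C) :
    ∃ d' ∈ X, ∃ C' : Set D, GenComponent Γ {d'} C' ∧ d ∈ C' := by
  classical
  -- the set of components containing a given element
  set S : D → Set (Set D) := fun x => {C' | IsComponent Γ C' ∧ x ∈ C'} with hSdef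
  set G : D → Set D := fun x => ⋂₀ S x with hGdef
  have hSne : ∀ x ∈ X, (S x).Nonempty := fun x hx => ⟨C, hC.1, hC.2.1 hx⟩
  have hGcomp : ∀ x ∈ X, IsComponent Γ (G x) ∧ x ∈ G x := fun x hx =>
    isComponent_sInter' (S x) (Set.toFinite _) (fun _ h => h) (hSne x hx)
  have hGgen : ∀ x ∈ X, GenComponent Γ {x} (G x) := by
    intro x hx
    refine ⟨(hGcomp x hx).1, by simpa using (hGcomp x hx).2, ?_⟩
    intro C' hC' hxC'
    exact Set.sInter_subset_of_mem ⟨hC', by simpa using hxC'⟩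
  -- the union of the G x over x ∈ X is a component containing X
  have hUcomp : IsComponent Γ (⋃₀ (G '' X)) := by
    refine isComponent_sUnion' hcc0 _ (Set.toFinite _) ?_ (hXne.image G)
    rintro _ ⟨x, hx, rfl⟩
    exact (hGcomp x hx).1
  have hXU : X ⊆ ⋃₀ (G '' X) := fun x hx =>
    ⟨G x, ⟨x, hx, rfl⟩, (hGcomp x hx).2⟩
  have hCU : C ⊆ ⋃₀ (G '' X) := hC.2.2 _ hUcomp hXU
  obtain ⟨_, ⟨x, hx, rfl⟩, hdx⟩ := hCU hd
  exact ⟨x, hx, G x, hGgen x hx, hdx⟩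

end CSPPaper
end
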